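/- arXiv:1203.0090 — 2 statements merged into one kernel-verified Lean document; each statement's English description precedes it below -/
import Mathlib

section
/- Let M be a matroid with finite ground set E and rank function r, let e \notin E, and let M+e denote the free extension of M by e. Then (x-1) T_{M+e}(x,y) = x T_M(x,y) + (xy - x - y) T_M(1,y) as an identity in Z[x,y], where T_M(1,y) denotes the Tutte polynomial of M evaluated at x = 1. -/
open MvPolynomial Finset
open scoped Matroid

namespace TuttePaper

open Classical

variable {α : Type*}

/-- The rank of a set in a matroid: the maximum cardinality of an independent subset. -/
noncomputable def rk (M : Matroid α) (A : Set α) : ℕ :=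
  sSup {n | ∃ I, M.Indep I ∧ I ⊆ A ∧ I.ncard = n}

/-- The Tutte polynomial of a matroid with finite ground set, as an element of ℤ[x,y];
the variable `X 0` plays the role of `x` and `X 1` that of `y`:
`T_M(x,y) = ∑_{A ⊆ E} (x-1)^(r(E)-r(A)) (y-1)^(|A|-r(A))`. -/
noncomputable def tutte (M : Matroid α) : MvPolynomial (Fin 2) ℤ :=
  if hE : M.E.Finite then
    ∑ A ∈ hE.toFinset.powerset,
      (X 0 - 1) ^ (rk M M.E - rk M ↑A) * (X 1 - 1) ^ (A.card - rk M ↑A)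
  else 0

/-- The Tutte polynomial with `x` evaluated at `1`, i.e. `T_M(1,y)`, as an element of ℤ[x,y]. -/
noncomputable def tutteX1 (M : Matroid α) : MvPolynomial (Fin 2) ℤ :=
  eval₂ C (fun i => if i = 0 then 1 else X 1) (tutte M)

/-- A loop of a matroid: an element whose singleton has rank zero. -/
def IsLoop (M : Matroid α) (e : α) : Prop := rk M {e} = 0

/-- A coloop of a matroid: an element contained in every basis. -/
def IsColoop (M : Matroid α) (e : α) : Prop := ∀ B, M.IsBase B → e ∈ B

/-- A circuit of a matroid: a minimal dependent set. -/
def IsCircuit (M : Matroid α) (C : Set α) : Prop :=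
  C ⊆ M.E ∧ ¬ M.Indep C ∧ ∀ D ⊂ C, M.Indep D

/-- A hyperplane of a matroid: a flat of rank `r(M) - 1`. -/
def IsHyperplane (M : Matroid α) (H : Set α) : Prop :=
  M.IsFlat H ∧ rk M H + 1 = rk M M.E

/-- Deletion of a set of elements from a matroid. -/
def deleteSet (M : Matroid α) (D : Set α) : Matroid α := M ↾ (M.E \ D)

/-- Contraction of a set of elements in a matroid, `M/C = (M✶ \ C)✶`. -/
def contractSet (M : Matroid α) (C : Set α) : Matroid α := ((M✶) ↾ (M.E \ C))✶

/-- Deletion of a single element. -/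
def deleteElem (M : Matroid α) (e : α) : Matroid α := deleteSet M {e}

/-- Contraction of a single element. -/
def contractElem (M : Matroid α) (e : α) : Matroid α := contractSet M {e}

/-- A matroid is paving if every circuit has size at least the rank of the matroid. -/
def Paving (M : Matroid α) : Prop := ∀ C, IsCircuit M C → rk M M.E ≤ C.ncard

/-- A matroid is sparse paving if it is paving and any two distinct circuits of size `r(M)`
have symmetric difference of size greater than two. -/
def SparsePaving (M : Matroid α) : Prop :=
  Paving M ∧ ∀ C₁ C₂, IsCircuit M C₁ → IsCircuit M C₂ →
    C₁.ncard = rk M M.E → C₂.ncard = rk M M.E → C₁ ≠ C₂ → 2 < (symmDiff C₁ C₂).ncard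

/-- An `m`-partition of a set `E`: a collection of at least two subsets of `E`, each with at
least `m` elements, such that every `m`-element subset of `E` is contained in exactly one
member of the collection. -/
def IsMPartition (m : ℕ) (E : Set α) (T : Set (Set α)) : Prop :=
  1 < T.ncard ∧ (∀ B ∈ T, B ⊆ E ∧ m ≤ B.ncard) ∧
    ∀ S ⊆ E, S.ncard = m → ∃! B, B ∈ T ∧ S ⊆ B

/-- `tcoef M i j` is the coefficient `t_{ij}` of `x^i y^j` in the Tutte polynomial of `M`. -/
noncomputable def tcoef (M : Matroid α) (i j : ℕ) : ℤ :=
  MvPolynomial.coeff (Finsupp.single (0 : Fin 2) i + Finsupp.single (1 : Fin 2) j) (tutte M)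

/-- The characteristic polynomial `χ_N(λ) = ∑_{A ⊆ E} (-1)^{|A|} λ^{r(E)-r(A)}` of a matroid,
evaluated at an element `l` of a commutative ring. -/
noncomputable def charEval {R : Type*} [CommRing R] (N : Matroid α) (l : R) : R :=
  if hE : N.E.Finite then
    ∑ A ∈ hE.toFinset.powerset, (-1 : R) ^ A.card * l ^ (rk N N.E - rk N ↑A)
  else 0

/-- Crapo's coboundary polynomial `χ̄_M(λ,t) = ∑_{X flat of M} t^{|X|} χ_{M/X}(λ)`,
evaluated at elements `l`, `t` of a commutative ring. -/
noncomputable def cobEval {R : Type*} [CommRing R] (M : Matroid α) (l t : R) : R :=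
  if hE : M.E.Finite then
    (hE.toFinset.powerset.filter (fun F : Finset α => M.IsFlat ↑F)).sum
      (fun F => t ^ F.card * charEval (contractSet M ↑F) l)
  else 0

/-! Split the subsets of `E ∪ e` into the sets `A ⊆ E` and `A ∪ e`. In the free extension
`r(A ∪ e) = min (r(A) + 1) r(M)`, and with this the identity already holds for the joint
contribution of each pair `A`, `A ∪ e`. -/

lemma rk_le_ncard (M : Matroid α) {A : Set α} (hA : A.Finite) : rk M A ≤ A.ncard :=
  csSup_le ⟨0, ∅, M.empty_indep, Set.empty_subset _, Set.ncard_empty _⟩ <| by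
    rintro m ⟨I, -, hIA, rfl⟩
    exact Set.ncard_le_ncard hIA hA

lemma rk_mono (M : Matroid α) {A B : Set α} (hB : B.Finite) (hAB : A ⊆ B) :
    rk M A ≤ rk M B := by
  refine csSup_le_csSup ⟨B.ncard, ?_⟩ ⟨0, ∅, M.empty_indep, Set.empty_subset _,
    Set.ncard_empty _⟩ ?_
  · rintro m ⟨I, -, hIB, rfl⟩
    exact Set.ncard_le_ncard hIB hB
  · rintro m ⟨I, hI, hIA, rfl⟩
    exact ⟨I, hI, hIA.trans hAB, rfl⟩

lemma tutte_eq_sum (M : Matroid α) (hE : M.E.Finite) :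
    tutte M = ∑ A ∈ hE.toFinset.powerset,
      (X 0 - 1) ^ (rk M M.E - rk M ↑A) * (X 1 - 1) ^ (A.card - rk M ↑A) := by
  rw [tutte, dif_pos hE]

lemma tutteX1_eq_sum (M : Matroid α) (hE : M.E.Finite) :
    tutteX1 M = ∑ A ∈ hE.toFinset.powerset,
      (0 : MvPolynomial (Fin 2) ℤ) ^ (rk M M.E - rk M ↑A) * (X 1 - 1) ^ (A.card - rk M ↑A) := by
  rw [tutteX1, tutte_eq_sum M hE, eval₂_sum]
  simp

lemma tutte_eq_sum_add_sum_insert (M' : Matroid α) {E : Set α} {e : α} (hE : E.Finite)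
    (he : e ∉ E) (hE' : M'.E = insert e E) :
    tutte M' =
      (∑ A ∈ hE.toFinset.powerset,
        (X 0 - 1) ^ (rk M' M'.E - rk M' ↑A) * (X 1 - 1) ^ (A.card - rk M' ↑A)) +
      ∑ A ∈ hE.toFinset.powerset,
        (X 0 - 1) ^ (rk M' M'.E - rk M' (insert e ↑A)) *
          (X 1 - 1) ^ (A.card + 1 - rk M' (insert e ↑A)) := by
  have hE'fin : M'.E.Finite := hE' ▸ hE.insert e
  have hground : hE'fin.toFinset = insert e hE.toFinset := by
    ext x
    simp [hE']
  have he' : e ∉ hE.toFinset := by simpa using he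
  rw [tutte_eq_sum M' hE'fin, hground, Finset.sum_powerset_insert he']
  congr 1
  refine Finset.sum_congr rfl fun A hA => ?_
  have heA : e ∉ A := fun h => he' (Finset.mem_powerset.mp hA h)
  rw [Finset.coe_insert, Finset.card_insert_of_notMem heA]

/-- Here `0 ^ (n - r)` is the factor `(x - 1) ^ (n - r)` evaluated at `x = 1`. -/
lemma freeExtension_term_identity {R : Type*} [CommRing R] (x y : R) {r n c : ℕ}
    (hrn : r ≤ n) (hrc : r ≤ c) :
    (x - 1) * ((x - 1) ^ (n - r) * (y - 1) ^ (c - r) +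
        (x - 1) ^ (n - if r < n then r + 1 else n) *
          (y - 1) ^ (c + 1 - if r < n then r + 1 else n)) =
      x * ((x - 1) ^ (n - r) * (y - 1) ^ (c - r)) +
        (x * y - x - y) * (0 ^ (n - r) * (y - 1) ^ (c - r)) := by
  rcases hrn.lt_or_eq with hlt | rfl
  · obtain ⟨k, hk⟩ : ∃ k, n - r = k + 1 := ⟨n - r - 1, by omega⟩
    rw [if_pos hlt, hk, show n - (r + 1) = k by omega, show c + 1 - (r + 1) = c - r by omega,
      zero_pow k.succ_ne_zero]
    ring
  · rw [if_neg (lt_irrefl r), Nat.sub_self, show c + 1 - r = c - r + 1 by omega]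
    ring

/-- the Tutte polynomial of the free extension `M + e` satisfies
`(x-1) T_{M+e}(x,y) = x T_M(x,y) + (xy - x - y) T_M(1,y)`. -/
theorem tutte_freeExtension (M M' : Matroid α) (hE : M.E.Finite) (e : α) (he : e ∉ M.E)
    (hE' : M'.E = insert e M.E)
    (hrk : ∀ A ⊆ M.E, rk M' A = rk M A)
    (hrke : ∀ A ⊆ M.E, rk M' (insert e A) =
      if rk M A < rk M M.E then rk M A + 1 else rk M M.E) :
    (X 0 - 1) * tutte M' = X 0 * tutte M + (X 0 * X 1 - X 0 - X 1) * tutteX1 M := by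
  have hrank : rk M' M'.E = rk M M.E := by
    rw [hE', hrke M.E subset_rfl, if_neg (lt_irrefl _)]
  rw [tutte_eq_sum_add_sum_insert M' hE he hE', tutte_eq_sum M hE, tutteX1_eq_sum M hE,
    mul_add, Finset.mul_sum, Finset.mul_sum, Finset.mul_sum, Finset.mul_sum,
    ← Finset.sum_add_distrib, ← Finset.sum_add_distrib]
  refine Finset.sum_congr rfl fun A hA => ?_
  have hAE : (A : Set α) ⊆ M.E := by simpa [← Finset.coe_subset] using hA
  rw [hrank, hrk _ hAE, hrke _ hAE, ← mul_add]
  refine freeExtension_term_identity _ _ (rk_mono M hE hAE) ?_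
  simpa using rk_le_ncard M A.finite_toSet

end TuttePaper
end

section
/- Let M be a matroid with finite ground set and let X be a parallel class of M with |X| = p+1. If X is not a cocircuit of M, then T_M(x,y) = T_{M \setminus X}(x,y) + (y^p + y^{p-1} + \cdots + y + 1) T_{M/X}(x,y). -/
open MvPolynomial Finset
open scoped Matroid

namespace TuttePaper

open Classical

variable {α : Type*}

/-- A parallel class of a matroid: a maximal subset of the ground set in which any two
distinct elements are parallel (i.e. form a two-element circuit) and no element is a loop. -/
def IsParallelClass (M : Matroid α) (P : Set α) : Prop :=
  P ⊆ M.E ∧ (∀ a ∈ P, ¬ IsLoop M a) ∧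
    (∀ a ∈ P, ∀ b ∈ P, a ≠ b → IsCircuit M {a, b}) ∧
    ∀ Q, P ⊆ Q → Q ⊆ M.E → (∀ a ∈ Q, ¬ IsLoop M a) →
      (∀ a ∈ Q, ∀ b ∈ Q, a ≠ b → IsCircuit M {a, b}) → Q = P

/-!
Split every `A ⊆ E` as `B ∪ S` with `B ⊆ E \ P` and `S ⊆ P`. Every element of `P` spans `P`, so
all proper subsets of `P` are coindependent; as `P` is not a cocircuit, `P` itself is coindependent
and deleting it keeps the rank of `E`, so the summands with `S = ∅` give `T_{M∖P}`. For `S ≠ ∅` the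
set `S` spans the rank-one set `P`, hence `r(B ∪ S) = r_{M/P}(B) + 1` and the summand is
`(y - 1)^(|S| - 1)` times the summand of `B` in `T_{M/P}`; finally
`∑_{∅ ≠ S ⊆ P} (y - 1)^(|S| - 1) = 1 + y + ⋯ + y^p`.
-/

section Rank

variable {M : Matroid α} {A C X S T : Set α} {e : α}

lemma eRk_eq_of_subset_of_subset_closure (hST : S ⊆ T) (hTS : T ⊆ M.closure S) :
    M.eRk S = M.eRk T :=
  le_antisymm (M.eRk_mono hST) ((M.eRk_mono hTS).trans (M.eRk_closure_eq S).le)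

lemma eRk_contract_add_eRk (hXC : Disjoint X C) : (M ／ C).eRk X + M.eRk C = M.eRk (X ∪ C) := by
  obtain ⟨J, hJ⟩ := M.exists_isBasis' C
  obtain ⟨I, hI, hJI⟩ :=
    hJ.indep.subset_isBasis'_of_subset (hJ.subset.trans Set.subset_union_right)
  have hIC : I ∩ C = J := (hJ.eq_of_subset_indep (hI.indep.subset Set.inter_subset_left)
    (Set.subset_inter hJI hJ.subset) Set.inter_subset_right).symm
  have hc := hI.contract_isBasis' hJ (hI.indep.subset (Set.union_subset Set.sdiff_subset hJI))
  rw [Set.union_sdiff_cancel_right hXC.le_bot] at hc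
  rw [← hc.encard_eq_eRk, ← hJ.encard_eq_eRk, ← hI.encard_eq_eRk, ← hIC,
    Set.encard_sdiff_add_encard_inter]

lemma cast_rk [M.RankFinite] (A : Set α) : (rk M A : ℕ∞) = M.eRk A := by
  obtain ⟨I, hI⟩ := M.exists_isBasis' A
  have hrk : rk M A = I.ncard := by
    refine IsGreatest.csSup_eq ⟨⟨I, hI.indep, hI.subset, rfl⟩, ?_⟩
    rintro _ ⟨J, hJ, hJA, rfl⟩
    have h : J.encard ≤ I.encard := hI.encard_eq_eRk ▸ hJ.encard_le_eRk_of_subset hJA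
    rwa [← hI.indep.finite.cast_ncard_eq, ← hJ.finite.cast_ncard_eq, Nat.cast_le] at h
  rw [hrk, hI.indep.finite.cast_ncard_eq, hI.encard_eq_eRk]

lemma rk_le_card [M.RankFinite] (A : Finset α) : rk M A ≤ A.card := by
  have h := (cast_rk (M := M) A).trans_le (M.eRk_le_encard A)
  rwa [Set.encard_coe_eq_coe_finsetCard, Nat.cast_le] at h

lemma rk_restrict {R : Set α} (hA : A ⊆ R) : rk (M ↾ R) A = rk M A := by
  unfold rk
  congr 1
  ext n
  constructor
  · rintro ⟨I, hI, hIA, rfl⟩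
    exact ⟨I, (Matroid.restrict_indep_iff.mp hI).1, hIA, rfl⟩
  · rintro ⟨I, hI, hIA, rfl⟩
    exact ⟨I, Matroid.restrict_indep_iff.mpr ⟨hI, hIA.trans hA⟩, hIA, rfl⟩

lemma isNonloop_of_not_isLoop [M.RankFinite] (he : e ∈ M.E) (h : ¬ IsLoop M e) :
    M.IsNonloop e := by
  by_contra hn
  have hloop := (Matroid.not_isNonloop_iff he).mp hn
  exact h (by exact_mod_cast (cast_rk {e}).trans hloop.eRk_eq)

end Rank

section ParallelClass

variable {M : Matroid α} {P B S : Set α} {e : α}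

lemma IsParallelClass.isNonloop [M.RankFinite] (hP : IsParallelClass M P) (he : e ∈ P) :
    M.IsNonloop e :=
  isNonloop_of_not_isLoop (hP.1 he) (hP.2.1 e he)

lemma IsParallelClass.subset_closure [M.RankFinite] (hP : IsParallelClass M P) (he : e ∈ P) :
    P ⊆ M.closure {e} := by
  intro a ha
  rcases eq_or_ne a e with rfl | hne
  · exact M.mem_closure_of_mem' rfl (hP.1 ha)
  · exact (hP.isNonloop he).indep.mem_closure_iff.2
      (Or.inl ⟨(hP.2.2.1 a ha e he hne).2.1, Set.pair_subset (hP.1 ha) (hP.1 he)⟩)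

lemma IsParallelClass.eRk_eq_one [M.RankFinite] (hP : IsParallelClass M P) (he : e ∈ P) :
    M.eRk P = 1 := by
  rw [← eRk_eq_of_subset_of_subset_closure (Set.singleton_subset_iff.2 he) (hP.subset_closure he),
    (hP.isNonloop he).eRk_eq]

lemma IsParallelClass.coindep [M.RankFinite] (hP : IsParallelClass M P)
    (hnc : ¬ IsCircuit M✶ P) : M.Coindep P := by
  rw [Matroid.coindep_def]
  by_contra h
  apply hnc
  refine ⟨hP.1, h, fun D hD => ?_⟩
  obtain ⟨f, hfP, hfD⟩ := Set.exists_of_ssubset hD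
  rw [← Matroid.coindep_def, Matroid.coindep_iff_closure_compl_eq_ground (hD.subset.trans hP.1)]
  refine (M.closure_subset_ground _).antisymm fun x hx => ?_
  by_cases hxD : x ∈ D
  · have hfE : f ∈ M.E \ D := ⟨hP.1 hfP, hfD⟩
    exact M.closure_subset_closure (Set.singleton_subset_iff.2 hfE)
      (hP.subset_closure hfP (hD.subset hxD))
  · exact M.mem_closure_of_mem' ⟨hx, hxD⟩

lemma IsParallelClass.rk_compl [M.RankFinite] (hP : IsParallelClass M P)
    (hnc : ¬ IsCircuit M✶ P) : rk M (M.E \ P) = rk M M.E := by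
  have h : (rk M (M.E \ P) : ℕ∞) = rk M M.E := by
    rw [cast_rk, cast_rk, (hP.coindep hnc).compl_spanning.eRk_eq, M.eRk_ground]
  exact_mod_cast h

lemma IsParallelClass.rk_union [M.RankFinite] (hP : IsParallelClass M P) (hB : B ⊆ M.E \ P)
    (hSP : S ⊆ P) (hS : S.Nonempty) : rk M (B ∪ S) = rk (M ／ P) B + 1 := by
  obtain ⟨e, he⟩ := hS
  have hBS : B ∪ S ⊆ M.E := Set.union_subset (hB.trans Set.sdiff_subset) (hSP.trans hP.1)
  have hspan : M.eRk (B ∪ S) = M.eRk (B ∪ P) :=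
    eRk_eq_of_subset_of_subset_closure (Set.union_subset_union_right B hSP)
      (Set.union_subset (Set.subset_union_left.trans (M.subset_closure _ hBS))
        ((hP.subset_closure (hSP he)).trans
          (M.closure_subset_closure (Set.singleton_subset_iff.2 (Or.inr he)))))
  have h : (rk M (B ∪ S) : ℕ∞) = rk (M ／ P) B + 1 := by
    rw [cast_rk, cast_rk, hspan, ← eRk_contract_add_eRk (Set.subset_sdiff.1 hB).2,
      hP.eRk_eq_one (hSP he)]
  exact_mod_cast h

end ParallelClass

lemma _root_.Finset.sum_powerset_union_of_disjoint {β : Type*} [AddCommMonoid β] [DecidableEq α]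
    {u v : Finset α} (huv : Disjoint u v) (f : Finset α → β) :
    ∑ A ∈ (u ∪ v).powerset, f A = ∑ B ∈ u.powerset, ∑ S ∈ v.powerset, f (B ∪ S) := by
  rw [powerset_union]
  -- `𝒜 ⊻ ℬ` unfolds to the image of `𝒜 ×ˢ ℬ` under `(· ∪ ·)`
  change ∑ A ∈ (u.powerset ×ˢ v.powerset).image (fun p => p.1 ∪ p.2), f A = _
  rw [sum_image, sum_product]
  rintro ⟨B, S⟩ hBS ⟨B', S'⟩ hBS' h
  simp only [coe_product, Set.mem_prod, mem_coe, mem_powerset] at hBS hBS' h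
  have hu : ∀ {B S : Finset α}, B ⊆ u → S ⊆ v → (B ∪ S) ∩ u = B := fun hB hS => by
    rw [union_inter_distrib_right, inter_eq_left.2 hB,
      disjoint_iff_inter_eq_empty.1 (huv.symm.mono_left hS), union_empty]
  have hv : ∀ {B S : Finset α}, B ⊆ u → S ⊆ v → (B ∪ S) ∩ v = S := fun hB hS => by
    rw [union_inter_distrib_right, inter_eq_left.2 hS,
      disjoint_iff_inter_eq_empty.1 (huv.mono_left hB), empty_union]
  exact Prod.ext ((hu hBS.1 hBS.2).symm.trans (h ▸ hu hBS'.1 hBS'.2))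
    ((hv hBS.1 hBS.2).symm.trans (h ▸ hv hBS'.1 hBS'.2))

lemma _root_.Finset.sum_powerset_erase_empty_sub_one_pow {R : Type*} [CommRing R] [DecidableEq α]
    (y : R) (Q : Finset α) :
    ∑ S ∈ Q.powerset.erase ∅, (y - 1) ^ (S.card - 1) = ∑ i ∈ range Q.card, y ^ i := by
  rw [sum_erase_eq_sub (empty_mem_powerset Q), card_empty, zero_tsub, pow_zero]
  induction Q using Finset.induction_on with
  | empty => simp
  | insert a Q haQ ih =>
    rw [sum_powerset_insert haQ, card_insert_of_notMem haQ, sum_range_succ, ← ih]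
    have hins : ∑ t ∈ Q.powerset, (y - 1) ^ ((insert a t).card - 1) = y ^ Q.card := by
      calc ∑ t ∈ Q.powerset, (y - 1) ^ ((insert a t).card - 1)
          = ∑ t ∈ Q.powerset, (y - 1) ^ t.card * 1 ^ (Q.card - t.card) := by
            refine sum_congr rfl fun t ht => ?_
            rw [card_insert_of_notMem fun hat => haQ (mem_powerset.1 ht hat), one_pow, mul_one,
              Nat.add_sub_cancel]
        _ = y ^ Q.card := by rw [sum_pow_mul_eq_add_pow, sub_add_cancel]
    rw [hins, sub_add_eq_add_sub]

noncomputable def tutteTerm (M : Matroid α) (A : Finset α) : MvPolynomial (Fin 2) ℤ :=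
  (X 0 - 1) ^ (rk M M.E - rk M A) * (X 1 - 1) ^ (A.card - rk M A)

lemma tutte_eq_sum_tutteTerm {M : Matroid α} {E : Finset α} (hE : ↑E = M.E) :
    tutte M = ∑ A ∈ E.powerset, tutteTerm M A := by
  rw [tutte, dif_pos (hE ▸ E.finite_toSet)]
  congr 2
  ext
  simp [← hE]

lemma tutteTerm_delete {M : Matroid α} {D : Set α} {B : Finset α} (hB : ↑B ⊆ M.E \ D)
    (hD : rk M (M.E \ D) = rk M M.E) : tutteTerm (M ＼ D) B = tutteTerm M B := by
  rw [tutteTerm, tutteTerm, Matroid.delete_eq_restrict, Matroid.restrict_ground_eq,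
    rk_restrict hB, rk_restrict subset_rfl, hD]

section TutteTerm

variable {M : Matroid α} {P : Set α} {B S : Finset α} [M.RankFinite]

lemma IsParallelClass.tutteTerm_union (hP : IsParallelClass M P) (hB : ↑B ⊆ M.E \ P)
    (hSP : ↑S ⊆ P) (hS : S.Nonempty) :
    tutteTerm M (B ∪ S) = (X 1 - 1) ^ (S.card - 1) * tutteTerm (M ／ P) B := by
  have hground := hP.rk_union (B := M.E \ P) subset_rfl subset_rfl ((coe_nonempty.2 hS).mono hSP)
  rw [Set.sdiff_union_of_subset hP.1] at hground
  have hcard : (B ∪ S).card = B.card + S.card :=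
    card_union_of_disjoint (disjoint_coe.1 (Set.disjoint_of_subset_left hB
      (Set.disjoint_sdiff_left.mono_right hSP)))
  have hrkB := rk_le_card (M := M ／ P) B
  have hS1 := hS.card_pos
  rw [tutteTerm, tutteTerm, coe_union, hP.rk_union hB hSP (coe_nonempty.2 hS), hground, hcard,
    Matroid.contract_ground, Nat.add_sub_add_right,
    show B.card + S.card - (rk (M ／ P) B + 1) = (B.card - rk (M ／ P) B) + (S.card - 1) by omega,
    pow_add]
  ring

lemma IsParallelClass.sum_powerset_tutteTerm_union (hP : IsParallelClass M P)
    (hnc : ¬ IsCircuit M✶ P) {Q : Finset α} (hQ : ↑Q = P) (hB : ↑B ⊆ M.E \ P) :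
    ∑ S ∈ Q.powerset, tutteTerm M (B ∪ S)
      = tutteTerm (M ＼ P) B + (∑ i ∈ range Q.card, X 1 ^ i) * tutteTerm (M ／ P) B := by
  rw [← add_sum_erase _ _ (empty_mem_powerset Q), union_empty,
    tutteTerm_delete hB (hP.rk_compl hnc), ← sum_powerset_erase_empty_sub_one_pow, sum_mul]
  refine congrArg _ (sum_congr rfl fun S hS => ?_)
  rw [mem_erase, mem_powerset, ← coe_subset, hQ] at hS
  exact hP.tutteTerm_union hB hS.2 (nonempty_iff_ne_empty.2 hS.1)

end TutteTerm

/-- if `P` is a parallel class of size `p + 1` that is not a cocircuit, then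
`T_M = T_{M∖P} + (y^p + ⋯ + y + 1) T_{M/P}`. -/
theorem tutte_parallelClass (M : Matroid α) (hE : M.E.Finite) (P : Set α) (p : ℕ)
    (hP : IsParallelClass M P) (hcard : P.ncard = p + 1) (hnc : ¬ IsCircuit (M✶) P) :
    tutte M = tutte (deleteSet M P)
      + (∑ i ∈ range (p + 1), X 1 ^ i) * tutte (contractSet M P) := by
  have : M.Finite := ⟨hE⟩
  set Q := (hE.subset hP.1).toFinset
  have hQ : ↑Q = P := (hE.subset hP.1).coe_toFinset
  have hQcard : Q.card = p + 1 := by rw [← hcard, ← hQ, Set.ncard_coe_finset]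
  set D := hE.toFinset \ Q
  have hD : ↑D = M.E \ P := by rw [coe_sdiff, hE.coe_toFinset, hQ]
  have hDQ : ↑(D ∪ Q) = M.E := by rw [coe_union, hD, hQ, Set.sdiff_union_of_subset hP.1]
  change tutte M = tutte (M ＼ P) + _ * tutte (M ／ P)
  rw [tutte_eq_sum_tutteTerm hDQ, sum_powerset_union_of_disjoint sdiff_disjoint,
    tutte_eq_sum_tutteTerm (M := M ＼ P) hD, tutte_eq_sum_tutteTerm (M := M ／ P) hD, mul_sum,
    ← sum_add_distrib, ← hQcard]
  exact sum_congr rfl fun B hB =>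
    hP.sum_powerset_tutteTerm_union hnc hQ (hD ▸ coe_subset.2 (mem_powerset.1 hB))

end TuttePaper
end
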